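/- arXiv:1302.5299 — 7 statements merged into one kernel-verified Lean document; each statement's English description precedes it below -/
import Mathlib

section
/- The collection of all abstract factorials forms a commutative semigroup under pointwise multiplication: if !_a and !_b are abstract factorials, then the function n ↦ n!_a · n!_b is also an abstract factorial. -/
/-- The pointwise product of two abstract factorials is an abstract factorial. -/
theorem abstract_factorial_mul
    (a b : ℕ → ℕ)
    (ha0 : a 0 = 1) (hapos : ∀ n, 0 < a n)
    (hadiv : ∀ k n : ℕ, k ≤ n → a k * a (n - k) ∣ a n)
    (hafact : ∀ n : ℕ, 1 ≤ n → Nat.factorial n ∣ a n)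
    (hb0 : b 0 = 1) (hbpos : ∀ n, 0 < b n)
    (hbdiv : ∀ k n : ℕ, k ≤ n → b k * b (n - k) ∣ b n)
    (hbfact : ∀ n : ℕ, 1 ≤ n → Nat.factorial n ∣ b n) :
    (a 0 * b 0 = 1) ∧ (∀ n, 0 < a n * b n) ∧
    (∀ k n : ℕ, k ≤ n → (a k * b k) * (a (n - k) * b (n - k)) ∣ a n * b n) ∧
    (∀ n : ℕ, 1 ≤ n → Nat.factorial n ∣ a n * b n) := by
  refine ⟨by simp [ha0, hb0], fun n => Nat.mul_pos (hapos n) (hbpos n), ?_, ?_⟩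
  · intro k n hk
    have := Nat.mul_dvd_mul (hadiv k n hk) (hbdiv k n hk)
    calc a k * b k * (a (n-k) * b (n-k)) = a k * a (n-k) * (b k * b (n-k)) := by ring
      _ ∣ a n * b n := this
  · intro n hn
    exact (hafact n hn).trans (Dvd.intro (b n) rfl)
end

section
/- (Brun's irrationality criterion) Let (x_n) be an increasing sequence of positive integers and (y_n) a sequence of positive integers such that the sequence y_n/x_n is strictly increasing and converges to a limit L, and such that Δ(Δy_n/Δx_n) < 0 for all n, where Δa_n = a_{n+1} − a_n. Then L is irrational. -/
open Filter

/-- Brun's irrationality criterion. -/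
theorem brun_irrationality_criterion
    (x y : ℕ → ℕ) (L : ℝ)
    (hxpos : ∀ n, 0 < x n) (hxmono : StrictMono x)
    (hypos : ∀ n, 0 < y n)
    (hratio : StrictMono (fun n => (y n : ℝ) / (x n : ℝ)))
    (hlim : Tendsto (fun n => (y n : ℝ) / (x n : ℝ)) atTop (nhds L))
    (hdelta : ∀ n : ℕ,
      ((y (n + 2) : ℝ) - y (n + 1)) / ((x (n + 2) : ℝ) - x (n + 1)) <
      ((y (n + 1) : ℝ) - y n) / ((x (n + 1) : ℝ) - x n)) :
    Irrational L := by
  rintro ⟨q, rfl⟩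
  set r : ℕ → ℝ := fun n => (y n : ℝ) / (x n : ℝ) with hr
  set s : ℕ → ℝ := fun n => ((y (n + 1) : ℝ) - y n) / ((x (n + 1) : ℝ) - x n) with hs
  have hx : ∀ n, (0:ℝ) < x n := fun n => by exact_mod_cast hxpos n
  have hy : ∀ n, (0:ℝ) < y n := fun n => by exact_mod_cast hypos n
  have hΔx : ∀ n, (0:ℝ) < (x (n+1) : ℝ) - x n := fun n => by
    have := hxmono (Nat.lt_succ_self n)
    have : (x n : ℝ) < x (n+1) := by exact_mod_cast this
    linarith
  -- ratios are below the limit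
  have hrL : ∀ n, r n < (q : ℝ) := fun n =>
    lt_of_lt_of_le (hratio (Nat.lt_succ_self n)) (hratio.monotone.ge_of_tendsto hlim (n+1))
  -- slope exceeds next ratio
  have hsr : ∀ n, r (n+1) < s n := by
    intro n
    have h1 : (y n : ℝ) * x (n+1) < (y (n+1) : ℝ) * x n := by
      have := hratio (Nat.lt_succ_self n)
      simpa [r, div_lt_div_iff₀ (hx n) (hx (n+1))] using this
    rw [hr, hs]
    rw [div_lt_div_iff₀ (hx (n+1)) (hΔx n)]
    nlinarith [h1]
  -- slopes strictly decreasing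
  have hanti : StrictAnti s := strictAnti_nat_of_succ_lt (fun n => hdelta n)
  -- slopes are ≥ L
  have hLs : ∀ n, (q : ℝ) ≤ s n := by
    intro n
    refine le_of_tendsto hlim ?_
    filter_upwards [eventually_ge_atTop (n+1)] with m hm
    obtain ⟨k, rfl⟩ := Nat.exists_eq_add_of_le hm
    refine le_of_lt (lt_of_lt_of_le ?_ (hanti.antitone (Nat.le_add_right n k)))
    have := hsr (n + k); simpa [Nat.add_right_comm] using this
  have hsL : ∀ n, (q : ℝ) < s n := fun n => lt_of_le_of_lt (hLs (n+1)) (hdelta n)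
  -- pass to integers
  have hden : (0:ℝ) < (q.den : ℝ) := by positivity
  have hqcast : (q : ℝ) = (q.num : ℝ) / (q.den : ℝ) := by
    rw [Rat.cast_def]
  set c : ℕ → ℤ := fun n => q.num * (x n : ℤ) - (q.den : ℤ) * (y n : ℤ) with hc
  have hcpos : ∀ n, 1 ≤ c n := by
    intro n
    have h := hrL n
    rw [hr, hqcast, div_lt_div_iff₀ (hx n) hden] at h
    have h' : (y n : ℤ) * (q.den : ℤ) < q.num * (x n : ℤ) := by exact_mod_cast h
    simp only [hc]
    linarith
  have hcdec : ∀ n, c (n+1) ≤ c n - 1 := by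
    intro n
    have h := hsL n
    rw [hs, hqcast, div_lt_div_iff₀ hden (hΔx n)] at h
    have h' : q.num * ((x (n+1) : ℤ) - (x n : ℤ)) < ((y (n+1) : ℤ) - (y n : ℤ)) * (q.den : ℤ) := by
      exact_mod_cast h
    simp only [hc]
    nlinarith [h']
  have hdesc : ∀ n : ℕ, c n ≤ c 0 - n := by
    intro n
    induction n with
    | zero => simp
    | succ k ih =>
      have := hcdec k
      push_cast
      omega
  have := hdesc (c 0).toNat
  have h0 := hcpos 0
  have h1 := hcpos ((c 0).toNat)
  omega
end

section
/- The Apéry numbers A_n defined by A_0 = 1, A_1 = 5, and (n+1)³ A_{n+1} = P(n) A_n − n³ A_{n−1} with P(n) = 34n³ + 51n² + 27n + 5, form a strictly increasing sequence of positive rationals for n ≥ 0 (i.e., A_{n+1} > A_n > 0 for all n). -/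
/-- The Apéry numbers `A n` form a strictly increasing sequence of positive rationals. -/
theorem apery_A_strict_mono_pos
    (A : ℕ → ℚ) (hA0 : A 0 = 1) (hA1 : A 1 = 5)
    (hrec : ∀ n : ℕ, A (n + 2) =
      ((34 * (n + 1 : ℚ) ^ 3 + 51 * (n + 1 : ℚ) ^ 2 + 27 * (n + 1 : ℚ) + 5) * A (n + 1)
        - (n + 1 : ℚ) ^ 3 * A n) / (n + 2 : ℚ) ^ 3) :
    ∀ n : ℕ, 0 < A n ∧ A n < A (n + 1) := by
  intro n
  induction n with
  | zero => rw [hA0, hA1]; norm_num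
  | succ n ih =>
    obtain ⟨h1, h2⟩ := ih
    refine ⟨h1.trans h2, ?_⟩
    rw [hrec n, lt_div_iff₀ (by positivity)]
    have hn : (0:ℚ) ≤ (n:ℚ) := Nat.cast_nonneg n
    nlinarith [mul_pos (h1.trans h2) (show (0:ℚ) < 33*((n:ℚ)+1)^3 + 51*((n:ℚ)+1)^2 + 27*((n:ℚ)+1) + 5 - ((n:ℚ)+2)^3 by nlinarith [sq_nonneg (n:ℚ)]),
      mul_pos (show (0:ℚ) < ((n:ℚ)+1)^3 by positivity) (sub_pos.mpr h2)]
end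

section
/- For the Apéry sequences A_n, B_n defined by the common recurrence (n+1)³ u_{n+1} = (34n³+51n²+27n+5) u_n − n³ u_{n−1} with A_0=1, A_1=5, B_0=0, B_1=6, one has the identity A_{n+1}B_n − A_nB_{n+1} = −6/(n+1)³ for all n ≥ 0. -/
/-- The Wronskian identity for the Apéry sequences:
`A_{n+1} B_n − A_n B_{n+1} = −6/(n+1)³`. -/
theorem apery_wronskian
    (A B : ℕ → ℚ)
    (hA0 : A 0 = 1) (hA1 : A 1 = 5) (hB0 : B 0 = 0) (hB1 : B 1 = 6)
    (hrecA : ∀ n : ℕ, A (n + 2) =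
      ((34 * (n + 1 : ℚ) ^ 3 + 51 * (n + 1 : ℚ) ^ 2 + 27 * (n + 1 : ℚ) + 5) * A (n + 1)
        - (n + 1 : ℚ) ^ 3 * A n) / (n + 2 : ℚ) ^ 3)
    (hrecB : ∀ n : ℕ, B (n + 2) =
      ((34 * (n + 1 : ℚ) ^ 3 + 51 * (n + 1 : ℚ) ^ 2 + 27 * (n + 1 : ℚ) + 5) * B (n + 1)
        - (n + 1 : ℚ) ^ 3 * B n) / (n + 2 : ℚ) ^ 3) :
    ∀ n : ℕ, A (n + 1) * B n - A n * B (n + 1) = -6 / (n + 1 : ℚ) ^ 3 := by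
  intro n
  induction n with
  | zero => norm_num [hA0, hA1, hB0, hB1]
  | succ n ih =>
    have h1 : ((n : ℚ) + 1) ^ 3 ≠ 0 := by positivity
    have h2 : ((n : ℚ) + 2) ^ 3 ≠ 0 := by positivity
    have key : A (n + 2) * B (n + 1) - A (n + 1) * B (n + 2)
        = ((n : ℚ) + 1) ^ 3 * (A (n + 1) * B n - A n * B (n + 1)) / ((n : ℚ) + 2) ^ 3 := by
      rw [hrecA n, hrecB n]; field_simp; ring
    push_cast
    rw [show ((n:ℚ) + 1 + 1) = (n:ℚ) + 2 by ring]
    rw [key, ih]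
    field_simp
end

section
/- For the Apéry sequences A_n, B_n (A_0=1, A_1=5, B_0=0, B_1=6, common recurrence u_{n+1} = ((34n³+51n²+27n+5)u_n − n³u_{n−1})/(n+1)³), the sequence B_n/A_n is strictly increasing, assuming A_n > 0 for all n. -/
/-- For the Apéry sequences, `B n / A n` is strictly increasing, assuming `A n > 0`. -/
theorem apery_ratio_strict_mono
    (A B : ℕ → ℚ)
    (hA0 : A 0 = 1) (hA1 : A 1 = 5) (hB0 : B 0 = 0) (hB1 : B 1 = 6)
    (hrecA : ∀ n : ℕ, A (n + 2) =
      ((34 * (n + 1 : ℚ) ^ 3 + 51 * (n + 1 : ℚ) ^ 2 + 27 * (n + 1 : ℚ) + 5) * A (n + 1)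
        - (n + 1 : ℚ) ^ 3 * A n) / (n + 2 : ℚ) ^ 3)
    (hrecB : ∀ n : ℕ, B (n + 2) =
      ((34 * (n + 1 : ℚ) ^ 3 + 51 * (n + 1 : ℚ) ^ 2 + 27 * (n + 1 : ℚ) + 5) * B (n + 1)
        - (n + 1 : ℚ) ^ 3 * B n) / (n + 2 : ℚ) ^ 3)
    (hApos : ∀ n, 0 < A n) :
    StrictMono (fun n => B n / A n) := by
  have key : ∀ n : ℕ, A (n + 1) * B n - A n * B (n + 1) = -6 / (n + 1 : ℚ) ^ 3 := by
    intro n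
    induction n with
    | zero => simp [hA0, hA1, hB0, hB1]
    | succ m ih =>
      have hm3 : ((m : ℚ) + 1) ^ 3 ≠ 0 := by positivity
      have hm2 : ((m : ℚ) + 2) ^ 3 ≠ 0 := by positivity
      have hA := hrecA m
      have hB := hrecB m
      have : A (m + 2) * B (m + 1) - A (m + 1) * B (m + 2)
          = ((m : ℚ) + 1) ^ 3 * (A (m + 1) * B m - A m * B (m + 1)) / ((m : ℚ) + 2) ^ 3 := by
        rw [hA, hB]; field_simp; ring
      rw [this, ih]
      push_cast
      field_simp
      ring
  apply strictMono_nat_of_lt_succ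
  intro n
  have h1 := hApos n
  have h2 := hApos (n + 1)
  rw [div_lt_div_iff₀ h1 h2]
  have hneg : A (n + 1) * B n - A n * B (n + 1) < 0 := by
    rw [key n]
    have : (0:ℚ) < (n + 1 : ℚ) ^ 3 := by positivity
    exact div_neg_of_neg_of_pos (by norm_num) this
  linarith [hneg]
end

section
/- For every n ≥ 1 and every prime p, the exponent e_p(n) = ∑_{m=0}^{∞} ⌊(n−1)/(p^m(p−1))⌋ satisfies e_p(n) ≥ v_p(n!), the p-adic valuation of n!; consequently n! divides n!_ℙ = ∏_p p^{e_p(n)}. -/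
/-! Legendre's formula writes `v_p(n!)` as `∑_{m ≥ 0} ⌊n / p^(m+1)⌋`, and each term is at most the
corresponding term `⌊(n - 1) / (p^m (p - 1))⌋` of `e_p(n)`: if `q = ⌊n / p^(m+1)⌋ ≥ 1`, then
`q p^m (p - 1) = q p^(m+1) - q p^m ≤ n - 1`. Since only primes `p ≤ n` divide `n!`, comparing
exponents prime by prime gives `n! ∣ n!_ℙ`. -/

/-- The exponent of the prime `p` in the Bhargava factorial `n!_ℙ`. -/
def bhargavaExp (p n : ℕ) : ℕ := ∑ m ∈ Finset.range n, (n - 1) / (p ^ m * (p - 1))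

/-- Bhargava's factorial of the set of primes. -/
def bhargavaPrimeFactorial (n : ℕ) : ℕ :=
  ∏ p ∈ (Finset.range (n + 1)).filter Nat.Prime, p ^ bhargavaExp p n

open Nat Finset

theorem Nat.div_mul_le_sub_one_div_mul_sub_one {a b : ℕ} (n : ℕ) (hb : 1 < b) :
    n / (a * b) ≤ (n - 1) / (a * (b - 1)) := by
  rcases Nat.eq_zero_or_pos a with rfl | ha
  · simp
  rw [Nat.le_div_iff_mul_le (Nat.mul_pos ha (by omega))]
  set k := n / (a * b)
  rcases Nat.eq_zero_or_pos k with hk | hk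
  · simp [hk]
  have hkab : k * (a * b) ≤ n := Nat.div_mul_le_self n _
  have hka : 1 ≤ k * a := Nat.mul_pos hk ha
  have hsplit : k * (a * (b - 1)) + k * a = k * (a * b) := by
    rw [← Nat.mul_add, ← Nat.mul_add_one, Nat.sub_add_cancel hb.le]
  omega

theorem factorization_factorial_le_bhargavaExp {p : ℕ} (hp : p.Prime) (n : ℕ) :
    (n !).factorization p ≤ bhargavaExp p n := by
  rw [factorization_factorial hp (Nat.lt_add_one_of_le (log_le_self p n)), sum_Ico_eq_sum_range,
    Nat.add_sub_cancel, bhargavaExp]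
  refine sum_le_sum fun m _ => ?_
  rw [add_comm, pow_succ]
  exact Nat.div_mul_le_sub_one_div_mul_sub_one n hp.one_lt

theorem Nat.support_factorization_factorial_subset (n : ℕ) :
    (n !).factorization.support ⊆ (range (n + 1)).filter Nat.Prime := by
  intro p hp
  rw [support_factorization, mem_primeFactors] at hp
  exact mem_filter.2 ⟨mem_range_succ_iff.2 (hp.1.dvd_factorial.1 hp.2.1), hp.1⟩

theorem Nat.factorial_dvd_prod_pow_of_factorization_le {n : ℕ} {e : ℕ → ℕ}
    (he : ∀ p, p.Prime → (n !).factorization p ≤ e p) :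
    n ! ∣ ∏ p ∈ (range (n + 1)).filter Nat.Prime, p ^ e p :=
  calc n ! = ∏ p ∈ (range (n + 1)).filter Nat.Prime, p ^ (n !).factorization p := by
        conv_lhs => rw [← prod_factorization_pow_eq_self (factorial_ne_zero n)]
        exact Finsupp.prod_of_support_subset _ (support_factorization_factorial_subset n) _
          fun _ _ => pow_zero _
    _ ∣ _ := prod_dvd_prod_of_dvd _ _ fun p hp => pow_dvd_pow p (he p (mem_filter.1 hp).2)

/-- For every `n ≥ 1` and every prime `p`, `e_p(n) ≥ v_p(n!)`; consequently
`n!` divides `n!_ℙ`. -/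
theorem factorial_dvd_bhargava_prime_factorial :
    ∀ n : ℕ, 1 ≤ n →
      (∀ p : ℕ, p.Prime → (Nat.factorial n).factorization p ≤ bhargavaExp p n) ∧
      Nat.factorial n ∣ bhargavaPrimeFactorial n := by
  intro n _
  have hexp (p : ℕ) (hp : p.Prime) := factorization_factorial_le_bhargavaExp hp n
  exact ⟨hexp, Nat.factorial_dvd_prod_pow_of_factorization_le hexp⟩
end

section
/- Under the hypotheses of Brun's criterion (x_n ∈ ℤ⁺ increasing, y_n ∈ ℤ⁺, y_n/x_n strictly increasing with limit L, and Δ(Δy_n/Δx_n) < 0 for all n), for every n one has y_n/x_n < L < Δy_n/Δx_n. -/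
open Filter

/-- Under Brun's hypotheses, the limit `L` is strictly trapped between `y_n/x_n` and the
difference quotient `Δy_n/Δx_n`. -/
theorem brun_limit_trapped
    (x y : ℕ → ℕ) (L : ℝ)
    (hxpos : ∀ n, 0 < x n) (hxmono : StrictMono x)
    (hypos : ∀ n, 0 < y n)
    (hratio : StrictMono (fun n => (y n : ℝ) / (x n : ℝ)))
    (hlim : Tendsto (fun n => (y n : ℝ) / (x n : ℝ)) atTop (nhds L))
    (hdelta : ∀ n : ℕ,
      ((y (n + 2) : ℝ) - y (n + 1)) / ((x (n + 2) : ℝ) - x (n + 1)) <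
      ((y (n + 1) : ℝ) - y n) / ((x (n + 1) : ℝ) - x n)) :
    ∀ n : ℕ, (y n : ℝ) / (x n : ℝ) < L ∧
      L < ((y (n + 1) : ℝ) - y n) / ((x (n + 1) : ℝ) - x n) := by
  set d : ℕ → ℝ := fun n => ((y (n + 1) : ℝ) - y n) / ((x (n + 1) : ℝ) - x n) with hd
  have hxlt : ∀ n, (x n : ℝ) < x (n + 1) := fun n => by
    exact_mod_cast hxmono (Nat.lt_succ_self n)
  have hdanti : StrictAnti d := strictAnti_nat_of_succ_lt (fun n => hdelta n)
  have key : ∀ n m, n ≤ m → (y m : ℝ) ≤ y n + d n * ((x m : ℝ) - x n) := by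
    intro n m hnm
    induction m with
    | zero =>
      interval_cases n
      simp
    | succ m ih =>
      rcases Nat.lt_or_ge n (m + 1) with h | h
      · have hnm' : n ≤ m := Nat.lt_succ_iff.mp h
        have ihm := ih hnm'
        have hdx : (0 : ℝ) < (x (m + 1) : ℝ) - x m := by linarith [hxlt m]
        have hdm : d m ≤ d n := hdanti.antitone hnm'
        have hy : d m * ((x (m + 1) : ℝ) - x m) = (y (m + 1) : ℝ) - y m :=
          div_mul_cancel₀ _ (ne_of_gt hdx)
        nlinarith [hdx, hdm, hy, ihm]
      · have hn : n = m + 1 := le_antisymm hnm h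
        subst hn; simp
  have hLle : ∀ n, L ≤ d n := by
    intro n
    have hxtop : Tendsto (fun m => (x m : ℝ)) atTop atTop :=
      tendsto_natCast_atTop_atTop.comp hxmono.tendsto_atTop
    have h0 : Tendsto (fun m => ((y n : ℝ) - d n * x n) / x m) atTop (nhds 0) :=
      Tendsto.div_atTop tendsto_const_nhds hxtop
    have hg : Tendsto (fun m => ((y n : ℝ) - d n * x n) / x m + d n) atTop (nhds (d n)) := by
      simpa using h0.add (tendsto_const_nhds : Tendsto (fun _ : ℕ => d n) atTop (nhds (d n)))
    refine le_of_tendsto_of_tendsto hlim hg ?_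
    filter_upwards [eventually_ge_atTop n] with m hm
    have hxm : (0 : ℝ) < x m := by exact_mod_cast hxpos m
    have hk := key n m hm
    rw [div_le_iff₀ hxm]
    have : ((y n : ℝ) - d n * x n) / x m * x m = (y n : ℝ) - d n * x n :=
      div_mul_cancel₀ _ (ne_of_gt hxm)
    nlinarith [hk, this]
  intro n
  constructor
  · calc (y n : ℝ) / x n < (y (n + 1) : ℝ) / x (n + 1) := hratio (Nat.lt_succ_self n)
      _ ≤ L := hratio.monotone.ge_of_tendsto hlim (n + 1)
  · exact lt_of_le_of_lt (hLle (n + 1)) (hdanti (Nat.lt_succ_self n))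
end
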